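/- arXiv:2205.03976 — 2 statements merged into one kernel-verified Lean document; each statement's English description precedes it below -/
import Mathlib

section
/- Let p be a prime and let B be the quaternion algebra over ℚ with ℚ-basis 1, i, j, k, where i² = −3, j² = −p, and k = ij = −ji. Let O be the ℤ-submodule of B spanned by 1, (−1+i)/2, j, (3+i+3j+k)/6. If θ ∈ O is nonzero and anticommutes with i (that is, iθ = −θi), then θ = (m/2)j + (n/2)k for some integers m, n with m ≡ n (mod 2), and hence the reduced norm of θ satisfies Nrd(θ) = (p/4)(m² + 3n²) ≥ p. -/
open Quaternion

/-- The quaternion algebra `(-3, -p | ℚ)`. -/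
@[reducible] def B0 (p : ℕ) := ℍ[ℚ, -3, -(p : ℚ)]

/-- The basis element `i` of `B0 p`, with `i² = -3`. -/
def qi (p : ℕ) : B0 p := ⟨0, 1, 0, 0⟩

/-- The basis element `j` of `B0 p`, with `j² = -p`. -/
def qj (p : ℕ) : B0 p := ⟨0, 0, 1, 0⟩

/-- The basis element `k = ij = -ji` of `B0 p`. -/
def qk (p : ℕ) : B0 p := ⟨0, 0, 0, 1⟩

/-- The maximal order `O = ⟨1, (-1+i)/2, j, (3+i+3j+k)/6⟩_ℤ` in `(-3,-p|ℚ)`,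
the endomorphism ring of `E₀`. -/
def O0 (p : ℕ) : Submodule ℤ (B0 p) :=
  Submodule.span ℤ
    ({1, (2 : ℚ)⁻¹ • (-1 + qi p), qj p,
      (6 : ℚ)⁻¹ • ((3 : B0 p) + qi p + (3 : ℚ) • qj p + qk p)} : Set (B0 p))

/-! Written in the ℤ-basis of `O0 p` with coordinates `a, b, c, d`, an element anticommuting with
`i` has vanishing `1`- and `i`-components, which forces `d = -3b`, `a = -b` and leaves
`θ = ((2c - 3b)/2) j + (-b/2) k`. Its reduced norm is `(p/4)(m² + 3n²)`, and for `m ≡ n (mod 2)`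
the integer `m² + 3n² = (m - n)(m + n) + 4n²` is a multiple of `4`, hence at least `4`
unless `θ = 0`. -/

namespace QuaternionAlgebra

variable {R : Type*} [CommRing R] {c₁ c₂ : R}

theorem re_mul_star (a : ℍ[R,c₁,c₂]) :
    (a * star a).re = a.re ^ 2 - c₁ * a.imI ^ 2 - c₂ * a.imJ ^ 2 + c₁ * c₂ * a.imK ^ 2 := by
  simp only [re_mul, re_star, imI_star, imJ_star, imK_star]
  ring

theorem re_eq_zero_and_imI_eq_zero_of_anticomm [NoZeroDivisors R] [NeZero (2 : R)]
    (hc₁ : c₁ ≠ 0) {a : ℍ[R,c₁,c₂]} (h : ⟨0, 1, 0, 0⟩ * a = -(a * ⟨0, 1, 0, 0⟩)) :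
    a.re = 0 ∧ a.imI = 0 := by
  have hre := congrArg re h
  have himI := congrArg imI h
  simp only [re_mul, imI_mul, re_neg, imI_neg] at hre himI
  constructor
  · have : (2 : R) * a.re = 0 := by linear_combination himI
    simpa [two_ne_zero] using this
  · have : (2 * c₁) * a.imI = 0 := by linear_combination hre
    simpa [two_ne_zero, hc₁] using this

end QuaternionAlgebra

theorem four_le_sq_add_three_mul_sq {m n : ℤ} (hpar : m % 2 = n % 2) (hmn : m ≠ 0 ∨ n ≠ 0) :
    4 ≤ m ^ 2 + 3 * n ^ 2 := by
  have hdvd : 4 ∣ m ^ 2 + 3 * n ^ 2 := by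
    obtain ⟨s, hs⟩ : 2 ∣ m - n := Int.ModEq.dvd hpar.symm
    exact ⟨n ^ 2 + n * s + s ^ 2, by rw [show m = n + 2 * s by omega]; ring⟩
  have hpos : 0 < m ^ 2 + 3 * n ^ 2 := by
    rcases hmn with h | h <;> positivity
  obtain ⟨t, ht⟩ := hdvd
  omega

open scoped QuaternionAlgebra in
theorem exists_int_coords_of_mem_O0 {p : ℕ} {θ : B0 p} (hθ : θ ∈ O0 p) :
    ∃ a b c d : ℤ, θ = ⟨a - b / 2 + d / 2, b / 2 + d / 6, c + d / 2, d / 6⟩ := by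
  obtain ⟨a, _, h₁, rfl⟩ := Submodule.mem_span_insert.mp hθ
  obtain ⟨b, _, h₂, rfl⟩ := Submodule.mem_span_insert.mp h₁
  obtain ⟨c, _, h₃, rfl⟩ := Submodule.mem_span_insert.mp h₂
  obtain ⟨d, rfl⟩ := Submodule.mem_span_singleton.mp h₃
  refine ⟨a, b, c, d, ?_⟩
  ext <;> simp [qi, qj, qk] <;> ring

theorem exists_eq_half_smul_qj_add_half_smul_qk {p : ℕ} {θ : B0 p} (hθO : θ ∈ O0 p)
    (hanti : qi p * θ = -(θ * qi p)) :
    ∃ m n : ℤ, θ = ((m : ℚ) / 2) • qj p + ((n : ℚ) / 2) • qk p ∧ m % 2 = n % 2 := by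
  obtain ⟨a, b, c, d, rfl⟩ := exists_int_coords_of_mem_O0 hθO
  obtain ⟨hre, himI⟩ :=
    QuaternionAlgebra.re_eq_zero_and_imI_eq_zero_of_anticomm (by norm_num) hanti
  dsimp only at hre himI
  have hd : d = -3 * b := by
    have : (d : ℚ) = -3 * b := by linear_combination 6 * himI
    exact_mod_cast this
  subst hd
  refine ⟨2 * c - 3 * b, -b, ?_, by omega⟩
  ext <;> simp [qj, qk] <;> linarith

theorem re_mul_star_half_smul_qj_add_half_smul_qk (p : ℕ) (m n : ℤ) :
    let θ : B0 p := ((m : ℚ) / 2) • qj p + ((n : ℚ) / 2) • qk p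
    (θ * star θ).re = ((p : ℚ) / 4) * ((m : ℚ) ^ 2 + 3 * (n : ℚ) ^ 2) := by
  intro θ
  rw [QuaternionAlgebra.re_mul_star]
  simp [θ, qj, qk]
  ring

theorem stmt_1_general (p : ℕ) (θ : B0 p) (hθO : θ ∈ O0 p) (hθ0 : θ ≠ 0)
    (hanti : qi p * θ = -(θ * qi p)) :
    ∃ m n : ℤ, θ = ((m : ℚ) / 2) • qj p + ((n : ℚ) / 2) • qk p ∧ m % 2 = n % 2 ∧
      (θ * star θ).re = ((p : ℚ) / 4) * ((m : ℚ) ^ 2 + 3 * (n : ℚ) ^ 2) ∧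
      (p : ℚ) ≤ (θ * star θ).re := by
  obtain ⟨m, n, rfl, hpar⟩ := exists_eq_half_smul_qj_add_half_smul_qk hθO hanti
  have hnorm := re_mul_star_half_smul_qj_add_half_smul_qk p m n
  have hmn : m ≠ 0 ∨ n ≠ 0 := by
    by_contra! h
    obtain ⟨rfl, rfl⟩ := h
    simp at hθ0
  have h4 : (4 : ℚ) ≤ (m : ℚ) ^ 2 + 3 * (n : ℚ) ^ 2 := by
    exact_mod_cast four_le_sq_add_three_mul_sq hpar hmn
  refine ⟨m, n, rfl, hpar, hnorm, ?_⟩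
  rw [hnorm]
  nlinarith [(Nat.cast_nonneg p : (0 : ℚ) ≤ p)]

/-- If a nonzero `θ` in the order `⟨1, (-1+i)/2, j, (3+i+3j+k)/6⟩_ℤ` of `(-3,-p|ℚ)`
anticommutes with `i`, then `θ = (m/2) j + (n/2) k` with `m, n ∈ ℤ` of the same
parity, and its reduced norm is `(p/4)(m² + 3n²) ≥ p`. -/
theorem stmt_1 (p : ℕ) (hp : p.Prime) (θ : B0 p) (hθO : θ ∈ O0 p) (hθ0 : θ ≠ 0)
    (hanti : qi p * θ = -(θ * qi p)) :
    ∃ m n : ℤ, θ = ((m : ℚ) / 2) • qj p + ((n : ℚ) / 2) • qk p ∧ m % 2 = n % 2 ∧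
      (θ * star θ).re = ((p : ℚ) / 4) * ((m : ℚ) ^ 2 + 3 * (n : ℚ) ^ 2) ∧
      (p : ℚ) ≤ (θ * star θ).re :=
  stmt_1_general p θ hθO hθ0 hanti
end

section
/- Let p be a prime and let B be the quaternion algebra over ℚ with ℚ-basis 1, i, j, k, where i² = −3, j² = −p, and k = ij = −ji. Every element of the ℤ-span of {1, (−1+i)/2, j, (3+i+3j+k)/6} that does not lie in the ℤ-span of {1, (−1+i)/2} has reduced norm strictly greater than p/3. -/
open Quaternion

/-! Write `θ = a + b (-1 + i) / 2 + c j + d (3 + i + 3j + k) / 6`. Then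
`3 Nrd θ = Q₁ + p Q₂` with `Q₁ = 3a² - 3ab + 3b² + 3ad + d² ≥ 0` and `Q₂ = 3c² + 3cd + d²`,
which is positive definite, so `Q₂ ≥ 1` once `(c, d) ≠ 0`, i.e. once `θ ∉ ℤ[ζ₃]`. Both forms
are `≡ d² (mod 3)`, so if `Q₂ = 1` then `Q₁ ≡ 1 (mod 3)` and `Q₁ ≥ 1`. Either way `3 Nrd θ > p`. -/

theorem QuaternionAlgebra.re_mul_star_of_c₂_eq_zero {R : Type*} [CommRing R] {c₁ c₃ : R}
    (x : ℍ[R, c₁, c₃]) :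
    (x * star x).re = x.re ^ 2 - c₁ * x.imI ^ 2 - c₃ * x.imJ ^ 2 + c₁ * c₃ * x.imK ^ 2 := by
  simp only [re_mul, re_star, zero_mul, add_zero, imI_star, mul_neg, imJ_star, imK_star, neg_zero,
    sub_neg_eq_add]
  ring

theorem Int.lt_add_mul_of_modEq {n p q₁ q₂ : ℤ} (hn : 1 < n) (hp : 0 < p) (hq₁ : 0 ≤ q₁)
    (hq₂ : 0 < q₂) (h : q₁ ≡ q₂ [ZMOD n]) : p < q₁ + p * q₂ := by
  obtain hq₂ | rfl := (Int.add_one_le_of_lt hq₂).lt_or_eq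
  · nlinarith
  · have : q₁ ≠ 0 := by
      rintro rfl
      exact absurd (Int.le_of_dvd one_pos h.dvd) (by omega)
    omega

/-- The coordinates of `a + b (-1 + i) / 2 + c j + d (3 + i + 3j + k) / 6`. -/
def ofIntCoeffs (p : ℕ) (a b c d : ℤ) : B0 p :=
  ⟨a - b / 2 + d / 2, b / 2 + d / 6, c + d / 2, d / 6⟩

lemma exists_ofIntCoeffs_of_mem_O0 {p : ℕ} {θ : B0 p} (hθ : θ ∈ O0 p) :
    ∃ a b c d : ℤ, θ = ofIntCoeffs p a b c d := by
  simp only [O0, Submodule.mem_span_insert, Submodule.mem_span_singleton] at hθ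
  obtain ⟨a, _, ⟨b, _, ⟨c, _, ⟨d, rfl⟩, rfl⟩, rfl⟩, rfl⟩ := hθ
  refine ⟨a, b, c, d, ?_⟩
  ext <;> simp [ofIntCoeffs, qi, qj, qk, QuaternionAlgebra.re_ofNat, QuaternionAlgebra.imI_ofNat,
    QuaternionAlgebra.imJ_ofNat, QuaternionAlgebra.imK_ofNat] <;> ring

lemma ofIntCoeffs_mem_span_one_omega {p : ℕ} (a b : ℤ) :
    ofIntCoeffs p a b 0 0 ∈ Submodule.span ℤ ({1, (2 : ℚ)⁻¹ • (-1 + qi p)} : Set (B0 p)) := by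
  have : ofIntCoeffs p a b 0 0 = a • (1 : B0 p) + b • (2 : ℚ)⁻¹ • (-1 + qi p) := by
    ext <;> simp [ofIntCoeffs, qi] <;> ring
  rw [this]
  exact add_mem (Submodule.smul_mem _ _ (Submodule.subset_span (by simp)))
    (Submodule.smul_mem _ _ (Submodule.subset_span (by simp)))

lemma three_mul_re_mul_star_ofIntCoeffs (p : ℕ) (a b c d : ℤ) :
    3 * (ofIntCoeffs p a b c d * star (ofIntCoeffs p a b c d)).re =
      ((3 * a ^ 2 - 3 * a * b + 3 * b ^ 2 + 3 * a * d + d ^ 2 : ℤ) : ℚ) +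
        p * ((3 * c ^ 2 + 3 * c * d + d ^ 2 : ℤ) : ℚ) := by
  rw [QuaternionAlgebra.re_mul_star_of_c₂_eq_zero]
  simp only [ofIntCoeffs]
  push_cast
  ring

/-- Every element of the order `⟨1, (-1+i)/2, j, (3+i+3j+k)/6⟩_ℤ` of `(-3,-p|ℚ)`
not lying in the suborder `⟨1, (-1+i)/2⟩_ℤ` has reduced norm strictly greater
than `p/3`. -/
theorem stmt_3 (p : ℕ) (hp : p.Prime) (θ : B0 p) (hθO : θ ∈ O0 p)
    (hθ : θ ∉ Submodule.span ℤ ({1, (2 : ℚ)⁻¹ • (-1 + qi p)} : Set (B0 p))) :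
    (p : ℚ) / 3 < (θ * star θ).re := by
  obtain ⟨a, b, c, d, rfl⟩ := exists_ofIntCoeffs_of_mem_O0 hθO
  have hcd : c ≠ 0 ∨ d ≠ 0 := by
    by_contra! h
    obtain ⟨rfl, rfl⟩ := h
    exact hθ (ofIntCoeffs_mem_span_one_omega a b)
  have hQ₁ : 0 ≤ 3 * a ^ 2 - 3 * a * b + 3 * b ^ 2 + 3 * a * d + d ^ 2 := by
    nlinarith [sq_nonneg (2 * a - b + d), sq_nonneg (3 * b + d)]
  have hQ₂ : 0 < 3 * c ^ 2 + 3 * c * d + d ^ 2 := by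
    rcases hcd with h | h <;> nlinarith [sq_nonneg (2 * c + d), sq_pos_of_ne_zero h]
  have hmod : 3 * a ^ 2 - 3 * a * b + 3 * b ^ 2 + 3 * a * d + d ^ 2 ≡
      3 * c ^ 2 + 3 * c * d + d ^ 2 [ZMOD 3] :=
    Int.modEq_iff_dvd.2 ⟨c ^ 2 + c * d - a ^ 2 + a * b - b ^ 2 - a * d, by ring⟩
  rw [div_lt_iff₀ three_pos, mul_comm, three_mul_re_mul_star_ofIntCoeffs]
  exact_mod_cast Int.lt_add_mul_of_modEq (by norm_num) (Int.natCast_pos.2 hp.pos) hQ₁ hQ₂ hmod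
end
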